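/- Let m and n be distinct positive integers, let s be a nonempty finite sequence of positive integers, and let t be a sequence of length 2 with values in {m, n}. Then C_{m,n}(s, C_{m,n}(s, t)) = t; equivalently, C_{m,n}(ss, t) = t, where ss denotes the concatenation of s with itself. -/
import Mathlib


/-- `expand1 m n x s` : the expansion `E_{m,n}(s, x)` of the finite sequence `s` with the
single starting point `x ∈ {m, n}`: the unique sequence with values in `{m, n}`, first term
`x`, and run-lengths `s`. -/
def expand1 (m n : ℕ) : ℕ → List ℕ → List ℕ
  | _, [] => []
  | x, a :: l => List.replicate a x ++ expand1 m n (m + n - x) l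

/-- `expand m n s t` : the expansion `E_{m,n}(s, t)` of the finite sequence `s` with the
finite sequence of starting points `t` (values in `{m, n}`), defined by
`E_{m,n}(s, t₁ t') = E_{m,n}(E_{m,n}(s, t₁), t')`. -/
def expand (m n : ℕ) : List ℕ → List ℕ → List ℕ
  | s, [] => s
  | s, x :: t => expand m n (expand1 m n x s) t

/-- `torsion m n s t` : the torsion `C_{m,n}(s, t)`, the sequence of the same length as `t`
whose `k`-th term equals `m + n` minus the last term of `E_{m,n}(s, t⁽ᵏ⁾)`, where `t⁽ᵏ⁾`
consists of the first `k` terms of `t`. -/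
def torsion (m n : ℕ) (s t : List ℕ) : List ℕ :=
  (List.range t.length).map fun k => m + n - (expand m n s (t.take (k + 1))).getLastD 0

lemma expand1_length (m n x : ℕ) (s : List ℕ) : (expand1 m n x s).length = s.sum := by
  induction s generalizing x with
  | nil => rfl
  | cons a l ih => simp [expand1, ih]

lemma expand1_ne_nil (m n x : ℕ) (s : List ℕ) (hs : s ≠ []) (hsp : ∀ a ∈ s, 0 < a) :
    expand1 m n x s ≠ [] := by
  have : 0 < (expand1 m n x s).length := by
    rw [expand1_length]
    rcases s with _ | ⟨a, l⟩
    · exact absurd rfl hs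
    · have := hsp a (by simp); simp; omega
  exact List.ne_nil_of_length_pos this

lemma expand1_mem (m n x : ℕ) (hx : x = m ∨ x = n) (s : List ℕ) :
    ∀ y ∈ expand1 m n x s, y = m ∨ y = n := by
  induction s generalizing x with
  | nil => simp [expand1]
  | cons a l ih =>
    intro y hy
    simp only [expand1, List.mem_append, List.mem_replicate] at hy
    rcases hy with ⟨-, rfl⟩ | hy
    · exact hx
    · exact ih (m + n - x) (by omega) y hy

lemma expand1_getLastD (m n x : ℕ) (hx : x ≤ m + n) (s : List ℕ) (hs : s ≠ [])
    (hsp : ∀ a ∈ s, 0 < a) :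
    (expand1 m n x s).getLastD 0 = if Even s.length then m + n - x else x := by
  induction s generalizing x with
  | nil => exact absurd rfl hs
  | cons a l ih =>
    have ha : 0 < a := hsp a (by simp)
    rcases eq_or_ne l [] with rfl | hl
    · obtain ⟨a, rfl⟩ := Nat.exists_eq_succ_of_ne_zero ha.ne'
      simp [expand1, List.replicate_succ']
    · have h2 : expand1 m n (m + n - x) l ≠ [] :=
        expand1_ne_nil m n _ l hl (fun b hb => hsp b (by simp [hb]))
      rw [expand1, List.getLastD_eq_getLast?, List.getLast?_append_of_ne_nil _ h2,
        ← List.getLastD_eq_getLast?,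
        ih (m + n - x) (by omega) hl (fun b hb => hsp b (by simp [hb]))]
      rcases Nat.even_or_odd l.length with h | h
      · have h1 : ¬ Even (a :: l).length := by
          simp [List.length_cons, Nat.even_add_one, h]
        rw [if_pos h, if_neg h1]
        omega
      · have h' : ¬ Even l.length := Nat.not_even_iff_odd.2 h
        have h1 : Even (a :: l).length := by
          simp [List.length_cons, Nat.even_add_one, h']
        rw [if_neg h', if_pos h1]

lemma torsion_pair (m n : ℕ) (hm : 0 < m) (hn : 0 < n)
    (x y : ℕ) (hx : x = m ∨ x = n) (hy : y = m ∨ y = n)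
    (s' : List ℕ) (hs' : s' ≠ []) (hsp' : ∀ c ∈ s', 0 < c) :
    torsion m n s' [x, y] =
      [if Even s'.length then x else m + n - x,
       if Even s'.sum then y else m + n - y] := by
  have hu : expand1 m n x s' ≠ [] := expand1_ne_nil m n x s' hs' hsp'
  have hup : ∀ c ∈ expand1 m n x s', 0 < c := by
    intro c hc
    rcases expand1_mem m n x hx s' c hc with rfl | rfl
    · exact hm
    · exact hn
  have h1 := expand1_getLastD m n x (by omega) s' hs' hsp'
  have h2 := expand1_getLastD m n y (by omega) (expand1 m n x s') hu hup
  rw [expand1_length] at h2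
  simp only [torsion, List.length_cons, List.length_nil]
  show List.map _ (List.range 2) = _
  rw [List.range_succ, List.range_succ, List.range_zero]
  simp only [List.nil_append, List.map_cons, List.map_nil, List.map_append, List.take]
  show [m + n - (expand m n s' [x]).getLastD 0]
      ++ [m + n - (expand m n s' [x, y]).getLastD 0] = _
  have e1 : expand m n s' [x] = expand1 m n x s' := rfl
  have e2 : expand m n s' [x, y] = expand1 m n y (expand1 m n x s') := rfl
  rw [e1, e2, h1, h2]
  by_cases hP : Even s'.length <;> by_cases hQ : Even s'.sum <;>
    simp [hP, hQ] <;> omega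

/-- For `t` of length `2` with values in `{m, n}`, `C_{m,n}(s, C_{m,n}(s, t)) = t`;
equivalently, `C_{m,n}(ss, t) = t`. -/
theorem torsion_involutive_length_two (m n : ℕ) (hm : 0 < m) (hn : 0 < n) (hmn : m ≠ n)
    (s : List ℕ) (hs : s ≠ []) (hsp : ∀ a ∈ s, 0 < a)
    (t : List ℕ) (htl : t.length = 2) (htv : ∀ a ∈ t, a = m ∨ a = n) :
    torsion m n s (torsion m n s t) = t ∧ torsion m n (s ++ s) t = t := by
  match t, htl with
  | [a, b], _ =>
  have hav := htv a (by simp)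
  have hbv := htv b (by simp)
  constructor
  · rw [torsion_pair m n hm hn a b hav hbv s hs hsp]
    have hc1 : (if Even s.length then a else m + n - a) = m ∨
        (if Even s.length then a else m + n - a) = n := by split_ifs <;> omega
    have hc2 : (if Even s.sum then b else m + n - b) = m ∨
        (if Even s.sum then b else m + n - b) = n := by split_ifs <;> omega
    rw [torsion_pair m n hm hn _ _ hc1 hc2 s hs hsp]
    by_cases hP : Even s.length <;> by_cases hQ : Even s.sum <;>
      simp [hP, hQ] <;> omega
  · have hss : s ++ s ≠ [] := by simp [hs]
    have hssp : ∀ c ∈ s ++ s, 0 < c := by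
      intro c hc; rcases List.mem_append.1 hc with h | h <;> exact hsp c h
    rw [torsion_pair m n hm hn a b hav hbv (s ++ s) hss hssp]
    have hL : Even (s ++ s).length := ⟨s.length, by simp⟩
    have hS : Even (s ++ s).sum := ⟨s.sum, by simp⟩
    simp [hL, hS]
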